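/- Let A(z_1), B(z_2) be N×N generating matrices (N = 2^n) of generalized-Boolean-function matrices with entries a_{r,i}: (ZMod 2)^{m_1} → ZMod q and b_{i,s}: (ZMod 2)^{m_2} → ZMod q, and let D(z_0) be the generalized delay matrix of order 2^n in n fresh variables. Then C(z_0,z_1,z_2) = A(z_1)·D(z_0)·B(z_2) is the generating matrix of the function matrix with (r,s) entry c_{r,s}(x_0,x_1,x_2) = Σ_{i=0}^{N-1} (a_{r,i}(x_1) + b_{i,s}(x_2))·g_i(x_0), where g_i: (ZMod 2)^n → ZMod q are the delta-basis functions on binary expansions. Moreover, if A and B are para-unitary then so is C. -/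

import Mathlib

open scoped BigOperators

noncomputable def omg (q : ℕ) : ℂ := Complex.exp (2 * Real.pi * Complex.I / q)

noncomputable def ec (q : ℕ) (a : ZMod q) : ℂ := omg q ^ a.val

/-- The monomial `z^x` for a Boolean multi-index `x`. -/
noncomputable def mon {d : ℕ} (z : Fin d → ℂ) (x : Fin d → ZMod 2) : ℂ :=
  ∏ k, z k ^ (x k).val

/-- Generating matrix of a GBF matrix. -/
noncomputable def genM (q Nn d : ℕ)
    (a : Fin Nn → Fin Nn → (Fin d → ZMod 2) → ZMod q) (z : Fin d → ℂ) :
    Matrix (Fin Nn) (Fin Nn) ℂ :=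
  fun i j => ∑ x : Fin d → ZMod 2, ec q (a i j x) * mon z x

/-- Conjugate transpose (coefficients conjugated) of the generating matrix, at `z`. -/
noncomputable def genMDag (q Nn d : ℕ)
    (a : Fin Nn → Fin Nn → (Fin d → ZMod 2) → ZMod q) (z : Fin d → ℂ) :
    Matrix (Fin Nn) (Fin Nn) ℂ :=
  fun i j => ∑ x : Fin d → ZMod 2, ec q (-(a j i x)) * mon z x

/-- The generalized delay matrix of order `2^n`, as a diagonal matrix. -/
noncomputable def gdelayMat (n : ℕ) (z : Fin n → ℂ) :
    Matrix (Fin (2 ^ n)) (Fin (2 ^ n)) ℂ :=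
  Matrix.diagonal (fun i : Fin (2 ^ n) => ∏ v : Fin n, z v ^ ((i : ℕ) / 2 ^ (v : ℕ) % 2))

/-- Delta-basis function `g_i : (ZMod 2)^n → ZMod q` for `i : Fin (2^n)`. -/
def gfun (q n : ℕ) (i : Fin (2 ^ n)) (x : Fin n → ZMod 2) : ZMod q :=
  ∏ v : Fin n,
    if ((i : ℕ) / 2 ^ (v : ℕ)) % 2 = 1 then ((x v).val : ZMod q)
    else 1 - ((x v).val : ZMod q)

/-!
The delay matrix `D(z₀)` is diagonal with `i`-th entry `z₀^{bin(i)}`, and `g_i` is the indicator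
function of the point `bin(i)`. So in the sum over `x₀` only the points `x₀ = bin(i)` contribute,
where the exponent `∑ⱼ (a_{r,j} + b_{j,s}) g_j(x₀)` collapses to `a_{r,i} + b_{i,s}`; as `ω^·` is
a character, that term is `A_{r,i} D_{i,i} B_{i,s}`. Para-unitarity follows from
`D(z₀) D(z₀⁻¹) = I` and the centrality of scalars: `C C† = A D (B B†) D† A† = c_A c_B I`.
-/

-- `2πi / 0 = 0` in Lean, so `ec 0` is the trivial character.
lemma omg_zero : omg 0 = 1 := by simp [omg]

lemma ec_add (q : ℕ) (u v : ZMod q) : ec q (u + v) = ec q u * ec q v := by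
  rcases Nat.eq_zero_or_pos q with rfl | hq
  · simp [ec, omg_zero]
  have : NeZero q := ⟨hq.ne'⟩
  have hprim : IsPrimitiveRoot (omg q) q := Complex.isPrimitiveRoot_exp q hq.ne'
  rw [ec, ec, ec, ZMod.val_add, ← pow_add]
  simpa [← hprim.eq_orderOf] using pow_mod_orderOf (omg q) (u.val + v.val)

-- `ZMod 2` is definitionally `Fin 2`, so this is Mathlib's base-`2` digit expansion.
def binaryDigitsEquiv (n : ℕ) : Fin (2 ^ n) ≃ (Fin n → ZMod 2) := finFunctionFinEquiv.symm

lemma binaryDigitsEquiv_val (n : ℕ) (i : Fin (2 ^ n)) (v : Fin n) :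
    (binaryDigitsEquiv n i v).val = (i : ℕ) / 2 ^ (v : ℕ) % 2 :=
  finFunctionFinEquiv_symm_apply_val i v

lemma ite_val_eq_one_zmod_two (q : ℕ) (x y : ZMod 2) :
    (if y.val = 1 then (x.val : ZMod q) else 1 - (x.val : ZMod q)) = if x = y then 1 else 0 := by
  simp only [← (ZMod.val_injective 2).eq_iff]
  obtain ⟨hx, hy⟩ := And.intro (ZMod.val_lt x) (ZMod.val_lt y)
  interval_cases x.val <;> interval_cases y.val <;> simp

lemma gfun_eq_ite (q n : ℕ) (j : Fin (2 ^ n)) (x : Fin n → ZMod 2) :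
    gfun q n j x = if x = binaryDigitsEquiv n j then 1 else 0 := by
  simp only [gfun, ← binaryDigitsEquiv_val, ite_val_eq_one_zmod_two, Fintype.prod_boole]
  congr 1
  exact propext funext_iff.symm

lemma sum_mul_gfun_binaryDigitsEquiv {q n : ℕ} (c : Fin (2 ^ n) → ZMod q) (i : Fin (2 ^ n)) :
    ∑ j, c j * gfun q n j (binaryDigitsEquiv n i) = c i := by
  simp [gfun_eq_ite]

lemma gdelayMat_eq_diagonal_mon (n : ℕ) (z : Fin n → ℂ) :
    gdelayMat n z = Matrix.diagonal fun i => mon z (binaryDigitsEquiv n i) := by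
  simp only [gdelayMat, mon, binaryDigitsEquiv_val]

lemma gdelayMat_mul_gdelayMat_inv (n : ℕ) (z : Fin n → ℂ) (hz : ∀ k, z k ≠ 0) :
    gdelayMat n z * gdelayMat n (fun k => (z k)⁻¹) = 1 := by
  have hinv : ∀ k, z k * (z k)⁻¹ = 1 := fun k => mul_inv_cancel₀ (hz k)
  simp only [gdelayMat, Matrix.diagonal_mul_diagonal, ← Finset.prod_mul_distrib, ← mul_pow, hinv,
    one_pow, Finset.prod_const_one, Matrix.diagonal_one]

lemma mul_mul_mul_eq_smul_one {R S : Type*} [CommSemiring S] [Semiring R] [Algebra S R]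
    {A A' B B' D D' : R} {a b : S} (hA : A * A' = a • 1) (hB : B * B' = b • 1)
    (hD : D * D' = 1) : A * D * B * (B' * D' * A') = (a * b) • 1 := by
  calc A * D * B * (B' * D' * A') = A * (D * (B * B') * D') * A' := by simp only [mul_assoc]
    _ = (a * b) • 1 := by
      rw [hB, mul_smul_one, smul_mul_assoc, hD, mul_smul_one, smul_mul_assoc, hA, smul_smul,
        mul_comm]

lemma genM_mul_gdelayMat_mul_genM_apply (q n m1 m2 : ℕ)
    (a : Fin (2 ^ n) → Fin (2 ^ n) → (Fin m1 → ZMod 2) → ZMod q)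
    (b : Fin (2 ^ n) → Fin (2 ^ n) → (Fin m2 → ZMod 2) → ZMod q)
    (z0 : Fin n → ℂ) (z1 : Fin m1 → ℂ) (z2 : Fin m2 → ℂ) (r s : Fin (2 ^ n)) :
    (genM q (2 ^ n) m1 a z1 * gdelayMat n z0 * genM q (2 ^ n) m2 b z2) r s =
      ∑ x0 : Fin n → ZMod 2, ∑ x1 : Fin m1 → ZMod 2, ∑ x2 : Fin m2 → ZMod 2,
        ec q (∑ i : Fin (2 ^ n), (a r i x1 + b i s x2) * gfun q n i x0) *
          (mon z0 x0 * mon z1 x1 * mon z2 x2) := by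
  rw [← (binaryDigitsEquiv n).sum_comp, Matrix.mul_apply]
  simp only [sum_mul_gfun_binaryDigitsEquiv, ec_add, gdelayMat_eq_diagonal_mon,
    Matrix.mul_diagonal, genM, Finset.sum_mul, Finset.mul_sum]
  refine Finset.sum_congr rfl fun i _ => ?_
  rw [Finset.sum_comm]
  exact Finset.sum_congr rfl fun x1 _ => Finset.sum_congr rfl fun x2 _ => by ring

theorem stmt18_general (q n m1 m2 : ℕ)
    (a : Fin (2 ^ n) → Fin (2 ^ n) → (Fin m1 → ZMod 2) → ZMod q)
    (b : Fin (2 ^ n) → Fin (2 ^ n) → (Fin m2 → ZMod 2) → ZMod q) :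
    (∀ (z0 : Fin n → ℂ) (z1 : Fin m1 → ℂ) (z2 : Fin m2 → ℂ) (r s : Fin (2 ^ n)),
      (genM q (2 ^ n) m1 a z1 * gdelayMat n z0 * genM q (2 ^ n) m2 b z2) r s =
        ∑ x0 : Fin n → ZMod 2, ∑ x1 : Fin m1 → ZMod 2, ∑ x2 : Fin m2 → ZMod 2,
          ec q (∑ i : Fin (2 ^ n), (a r i x1 + b i s x2) * gfun q n i x0) *
            (mon z0 x0 * mon z1 x1 * mon z2 x2)) ∧
    ((∃ cA : ℝ, ∀ z1 : Fin m1 → ℂ, (∀ k, z1 k ≠ 0) →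
        genM q (2 ^ n) m1 a z1 * genMDag q (2 ^ n) m1 a (fun k => (z1 k)⁻¹) =
          (cA : ℂ) • (1 : Matrix (Fin (2 ^ n)) (Fin (2 ^ n)) ℂ)) →
      (∃ cB : ℝ, ∀ z2 : Fin m2 → ℂ, (∀ k, z2 k ≠ 0) →
        genM q (2 ^ n) m2 b z2 * genMDag q (2 ^ n) m2 b (fun k => (z2 k)⁻¹) =
          (cB : ℂ) • (1 : Matrix (Fin (2 ^ n)) (Fin (2 ^ n)) ℂ)) →
      ∃ cC : ℝ, ∀ (z0 : Fin n → ℂ) (z1 : Fin m1 → ℂ) (z2 : Fin m2 → ℂ),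
        (∀ k, z0 k ≠ 0) → (∀ k, z1 k ≠ 0) → (∀ k, z2 k ≠ 0) →
          (genM q (2 ^ n) m1 a z1 * gdelayMat n z0 * genM q (2 ^ n) m2 b z2) *
            (genMDag q (2 ^ n) m2 b (fun k => (z2 k)⁻¹) *
              gdelayMat n (fun k => (z0 k)⁻¹) *
              genMDag q (2 ^ n) m1 a (fun k => (z1 k)⁻¹)) =
            (cC : ℂ) • (1 : Matrix (Fin (2 ^ n)) (Fin (2 ^ n)) ℂ)) := by
  refine ⟨genM_mul_gdelayMat_mul_genM_apply q n m1 m2 a b, ?_⟩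
  rintro ⟨cA, hA⟩ ⟨cB, hB⟩
  refine ⟨cA * cB, fun z0 z1 z2 h0 h1 h2 => ?_⟩
  rw [Complex.ofReal_mul]
  exact mul_mul_mul_eq_smul_one (hA z1 h1) (hB z2 h2) (gdelayMat_mul_gdelayMat_inv n z0 h0)

/-- `C(z₀,z₁,z₂) = A(z₁)·D(z₀)·B(z₂)` is the generating matrix of the function matrix with
entries `c_{r,s}(x₀,x₁,x₂) = ∑_i (a_{r,i}(x₁) + b_{i,s}(x₂))·g_i(x₀)`; moreover if `A` and
`B` are para-unitary then so is `C`. -/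
theorem stmt18 (q n m1 m2 : ℕ) (hq : 0 < q)
    (a : Fin (2 ^ n) → Fin (2 ^ n) → (Fin m1 → ZMod 2) → ZMod q)
    (b : Fin (2 ^ n) → Fin (2 ^ n) → (Fin m2 → ZMod 2) → ZMod q) :
    (∀ (z0 : Fin n → ℂ) (z1 : Fin m1 → ℂ) (z2 : Fin m2 → ℂ) (r s : Fin (2 ^ n)),
      (genM q (2 ^ n) m1 a z1 * gdelayMat n z0 * genM q (2 ^ n) m2 b z2) r s =
        ∑ x0 : Fin n → ZMod 2, ∑ x1 : Fin m1 → ZMod 2, ∑ x2 : Fin m2 → ZMod 2,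
          ec q (∑ i : Fin (2 ^ n), (a r i x1 + b i s x2) * gfun q n i x0) *
            (mon z0 x0 * mon z1 x1 * mon z2 x2)) ∧
    ((∃ cA : ℝ, ∀ z1 : Fin m1 → ℂ, (∀ k, z1 k ≠ 0) →
        genM q (2 ^ n) m1 a z1 * genMDag q (2 ^ n) m1 a (fun k => (z1 k)⁻¹) =
          (cA : ℂ) • (1 : Matrix (Fin (2 ^ n)) (Fin (2 ^ n)) ℂ)) →
      (∃ cB : ℝ, ∀ z2 : Fin m2 → ℂ, (∀ k, z2 k ≠ 0) →
        genM q (2 ^ n) m2 b z2 * genMDag q (2 ^ n) m2 b (fun k => (z2 k)⁻¹) =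
          (cB : ℂ) • (1 : Matrix (Fin (2 ^ n)) (Fin (2 ^ n)) ℂ)) →
      ∃ cC : ℝ, ∀ (z0 : Fin n → ℂ) (z1 : Fin m1 → ℂ) (z2 : Fin m2 → ℂ),
        (∀ k, z0 k ≠ 0) → (∀ k, z1 k ≠ 0) → (∀ k, z2 k ≠ 0) →
          (genM q (2 ^ n) m1 a z1 * gdelayMat n z0 * genM q (2 ^ n) m2 b z2) *
            (genMDag q (2 ^ n) m2 b (fun k => (z2 k)⁻¹) *
              gdelayMat n (fun k => (z0 k)⁻¹) *
              genMDag q (2 ^ n) m1 a (fun k => (z1 k)⁻¹)) =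
            (cC : ℂ) • (1 : Matrix (Fin (2 ^ n)) (Fin (2 ^ n)) ℂ)) :=
  stmt18_general q n m1 m2 a b
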